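/- Let F : 𝒜 → ℬ and G : ℬ → 𝒜 be an adjoint pair of functors between abelian categories with unit μ : 1_𝒜 → GF, and let 𝒟 ⊆ 𝒜 be a class of objects such that μ_D is an isomorphism for every D ∈ 𝒟. Then for an object M ∈ ℬ: M has an F(𝒟)-precover if and only if G(M) has a 𝒟-precover; and M has an F(𝒟)-cover if and only if G(M) has a 𝒟-cover. -/
import Mathlib


open CategoryTheory

set_option autoImplicit false

set_option linter.unnecessarySimpa false

universe v₁ v₂ u₁ u₂

/-- A `S`-precover of `M`: a morphism from an object of `S` through which every other
morphism from an object of `S` factors. -/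
def IsPrecover {C : Type u₁} [Category.{v₁} C] (S : C → Prop) {X M : C} (f : X ⟶ M) : Prop :=
  S X ∧ ∀ X' : C, S X' → ∀ g : X' ⟶ M, ∃ h : X' ⟶ X, h ≫ f = g

/-- A `S`-cover: a precover such that every compatible endomorphism is an automorphism. -/
def IsCover {C : Type u₁} [Category.{v₁} C] (S : C → Prop) {X M : C} (f : X ⟶ M) : Prop :=
  IsPrecover S f ∧ ∀ g : X ⟶ X, g ≫ f = f → IsIso g

/-- The essential image class `F(𝒟)`. -/
def imageClass {A : Type u₁} {B : Type u₂} [Category.{v₁} A] [Category.{v₂} B]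
    (F : A ⥤ B) (D : A → Prop) : B → Prop :=
  fun Y => ∃ X : A, D X ∧ Nonempty (F.obj X ≅ Y)

section AuxLemmas

variable {A : Type u₁} {B : Type u₂} [Category.{v₁} A] [Category.{v₂} B]
    (F : A ⥤ B) (G : B ⥤ A) (adj : F ⊣ G)

lemma aux1 {X : A} {Y : B} (g : X ⟶ G.obj Y) :
    adj.unit.app X ≫ G.map ((adj.homEquiv X Y).symm g) = g :=
  (adj.homEquiv X Y).apply_symm_apply g

lemma aux2 {X : A} {Y : B} (u : F.obj X ⟶ Y) :
    F.map (adj.homEquiv X Y u) ≫ adj.counit.app Y = u :=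
  (adj.homEquiv X Y).symm_apply_apply u

variable (D : A → Prop)

/-- Forward precover transfer: transpose of an `F(𝒟)`-precover is a `𝒟`-precover. -/
lemma aux_fwd_pre (hunit : ∀ X : A, D X → IsIso (adj.unit.app X)) {M X : B} (f : X ⟶ M)
    (D0 : A) (hD0 : D D0) (e : F.obj D0 ≅ X)
    (hfac : ∀ X' : B, imageClass F D X' → ∀ g : X' ⟶ M, ∃ h : X' ⟶ X, h ≫ f = g) :
    IsPrecover D (adj.homEquiv D0 M (e.hom ≫ f)) := by
  refine ⟨hD0, fun D' hD' g => ?_⟩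
  obtain ⟨h, hh⟩ := hfac (F.obj D') ⟨D', hD', ⟨Iso.refl _⟩⟩ ((adj.homEquiv D' M).symm g)
  haveI := hunit D0 hD0
  refine ⟨adj.homEquiv D' (F.obj D0) (h ≫ e.inv) ≫ inv (adj.unit.app D0), ?_⟩
  rw [Adjunction.homEquiv_unit, Adjunction.homEquiv_unit, Functor.map_comp, Functor.map_comp]
  simp only [Category.assoc, IsIso.inv_hom_id_assoc, ← Functor.map_comp]
  rw [Iso.inv_hom_id_assoc, hh]
  exact aux1 F G adj g

/-- Backward precover transfer: transpose of a `𝒟`-precover is an `F(𝒟)`-precover. -/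
lemma aux_bwd_pre {M : B} (D0 : A) (hD0 : D D0) (f : D0 ⟶ G.obj M)
    (hfac : ∀ D' : A, D D' → ∀ g : D' ⟶ G.obj M, ∃ h : D' ⟶ D0, h ≫ f = g) :
    IsPrecover (imageClass F D) ((adj.homEquiv D0 M).symm f) := by
  refine ⟨⟨D0, hD0, ⟨Iso.refl _⟩⟩, fun X' hX' g => ?_⟩
  obtain ⟨D', hD', ⟨e'⟩⟩ := hX'
  obtain ⟨h, hh⟩ := hfac D' hD' (adj.homEquiv D' M (e'.hom ≫ g))
  refine ⟨e'.inv ≫ F.map h, ?_⟩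
  rw [Adjunction.homEquiv_counit, Category.assoc, ← Category.assoc (F.map h),
    ← Functor.map_comp, hh]
  rw [aux2 F G adj (e'.hom ≫ g), Iso.inv_hom_id_assoc]

end AuxLemmas

/-- For an adjoint pair `(F, G)` between abelian categories whose unit is an
isomorphism on a class `𝒟`, an object `M` has an `F(𝒟)`-(pre)cover iff `G(M)` has a
`𝒟`-(pre)cover. -/
theorem statement7 {A : Type u₁} {B : Type u₂} [Category.{v₁} A] [Category.{v₂} B]
    [Abelian A] [Abelian B] (F : A ⥤ B) (G : B ⥤ A) (adj : F ⊣ G)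
    (D : A → Prop) (hunit : ∀ X : A, D X → IsIso (adj.unit.app X)) (M : B) :
    ((∃ (X : B) (f : X ⟶ M), IsPrecover (imageClass F D) f) ↔
      (∃ (X : A) (f : X ⟶ G.obj M), IsPrecover D f)) ∧
    ((∃ (X : B) (f : X ⟶ M), IsCover (imageClass F D) f) ↔
      (∃ (X : A) (f : X ⟶ G.obj M), IsCover D f)) := by
  constructor
  · constructor
    · rintro ⟨X, f, ⟨⟨D0, hD0, ⟨e⟩⟩, hfac⟩⟩
      exact ⟨D0, adj.homEquiv D0 M (e.hom ≫ f),
        aux_fwd_pre F G adj D hunit f D0 hD0 e hfac⟩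
    · rintro ⟨D0, f, hD0, hfac⟩
      exact ⟨F.obj D0, (adj.homEquiv D0 M).symm f,
        aux_bwd_pre F G adj D D0 hD0 f hfac⟩
  · constructor
    · rintro ⟨X, f, ⟨⟨D0, hD0, ⟨e⟩⟩, hfac⟩, hcov⟩
      refine ⟨D0, adj.homEquiv D0 M (e.hom ≫ f),
        aux_fwd_pre F G adj D hunit f D0 hD0 e hfac, fun g hg => ?_⟩
      haveI := hunit D0 hD0
      have h3 := aux2 F G adj (e.hom ≫ f)
      have h2 : F.map g ≫ e.hom ≫ f = e.hom ≫ f := by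
        calc F.map g ≫ e.hom ≫ f
            = F.map g ≫ F.map (adj.homEquiv D0 M (e.hom ≫ f)) ≫ adj.counit.app M := by
              rw [h3]
          _ = F.map (g ≫ adj.homEquiv D0 M (e.hom ≫ f)) ≫ adj.counit.app M := by
              rw [Functor.map_comp, Category.assoc]
          _ = F.map (adj.homEquiv D0 M (e.hom ≫ f)) ≫ adj.counit.app M := by rw [hg]
          _ = e.hom ≫ f := h3
      have hg' : (e.inv ≫ F.map g ≫ e.hom) ≫ f = f := by
        rw [Category.assoc, Category.assoc, h2, Iso.inv_hom_id_assoc]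
      haveI : IsIso (e.inv ≫ F.map g ≫ e.hom) := hcov _ hg'
      haveI : IsIso (F.map g) := by
        have : F.map g = e.hom ≫ (e.inv ≫ F.map g ≫ e.hom) ≫ e.inv := by simp
        rw [this]; infer_instance
      haveI : IsIso (G.map (F.map g)) := inferInstance
      have hnat : g ≫ adj.unit.app D0 = adj.unit.app D0 ≫ G.map (F.map g) := by
        simpa using adj.unit.naturality g
      have : g = adj.unit.app D0 ≫ G.map (F.map g) ≫ inv (adj.unit.app D0) := by
        rw [← Category.assoc, ← hnat]; simp
      rw [this]; infer_instance
    · rintro ⟨D0, f, ⟨hD0, hfac⟩, hcov⟩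
      refine ⟨F.obj D0, (adj.homEquiv D0 M).symm f,
        aux_bwd_pre F G adj D D0 hD0 f hfac, fun g hg => ?_⟩
      haveI := hunit D0 hD0
      set k : D0 ⟶ D0 := adj.unit.app D0 ≫ G.map g ≫ inv (adj.unit.app D0) with hk
      have h4 : inv (adj.unit.app D0) ≫ f = G.map ((adj.homEquiv D0 M).symm f) := by
        rw [IsIso.inv_comp_eq]; exact (aux1 F G adj f).symm
      have hkf : k ≫ f = f := by
        rw [hk]
        simp only [Category.assoc]
        rw [h4, ← Functor.map_comp, hg]
        exact aux1 F G adj f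
      haveI : IsIso k := hcov k hkf
      have hnat2 : k ≫ adj.unit.app D0 = adj.unit.app D0 ≫ G.map (F.map k) := by
        simpa using adj.unit.naturality k
      have : g = F.map k := by
        apply (adj.homEquiv D0 (F.obj D0)).injective
        rw [Adjunction.homEquiv_unit, Adjunction.homEquiv_unit, ← hnat2, hk]
        simp
      rw [this]; infer_instance
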